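/- arXiv:1603.03765 — 5 statements merged into one kernel-verified Lean document; each statement's English description precedes it below -/
import Mathlib

section
/- For all positive integers l and m, F_{2l+1} · [(-1)^m + ∑_{k=0}^{m-1} (-1)^k · L_{2(m-k)(2l+1)}] = F_{2m+1} · [(-1)^l + ∑_{k=0}^{l-1} (-1)^k · L_{2(l-k)(2m+1)}], where the identity is understood in the integers. -/
/-- The Lucas numbers: L 0 = 2, L 1 = 1, L (n+2) = L n + L (n+1). -/
def lucas : ℕ → ℕ
  | 0 => 2
  | 1 => 1
  | n + 2 => lucas n + lucas (n + 1)

lemma lucas_fib : ∀ n, lucas (n + 1) = Nat.fib n + Nat.fib (n + 2)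
  | 0 => rfl
  | 1 => rfl
  | n + 2 => by
    have h1 := lucas_fib n
    have h2 := lucas_fib (n + 1)
    show lucas (n + 1) + lucas (n + 2) = _
    rw [h1, h2, Nat.fib_add_two (n := n + 2), Nat.fib_add_two (n := n)]
    ring

lemma docagne : ∀ n t : ℕ, (Nat.fib n : ℤ) * Nat.fib (n + 1 + t)
    - Nat.fib (n + 1) * Nat.fib (n + t) = (-1) ^ (n + 1) * Nat.fib t
  | 0, t => by simp
  | n + 1, t => by
    have h := docagne n t
    have e1 : n + 1 + 1 + t = (n + t) + 2 := by ring
    have e2 : n + 1 + t = (n + t) + 1 := by ring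
    rw [e1, e2, Nat.fib_add_two, Nat.fib_add_two (n := n)]
    push_cast
    rw [e2] at h
    push_cast at h
    ring_nf
    ring_nf at h
    linarith

lemma key (n t : ℕ) : (Nat.fib (n + 1) : ℤ) * lucas (n + 1 + t)
    + (-1) ^ (n + 1) * Nat.fib t = Nat.fib (2 * n + 2 + t) := by
  have hfa : Nat.fib (2 * n + 2 + t) =
      Nat.fib n * Nat.fib (n + 1 + t) + Nat.fib (n + 1) * Nat.fib (n + 1 + t + 1) := by
    have := Nat.fib_add n (n + 1 + t)
    rw [show n + (n + 1 + t) + 1 = 2 * n + 2 + t by ring] at this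
    exact this
  have hl : lucas (n + 1 + t) = Nat.fib (n + t) + Nat.fib (n + t + 2) := by
    rw [show n + 1 + t = (n + t) + 1 by ring, lucas_fib]
  have hd := docagne n t
  rw [hfa, hl]
  push_cast
  rw [show n + 1 + t + 1 = n + t + 2 by ring] at *
  linarith

lemma main_claim (l j : ℕ) :
    (Nat.fib (2 * l + 1) : ℤ) *
      ((-1) ^ j + ∑ k ∈ Finset.range j, (-1) ^ k * (lucas (2 * (j - k) * (2 * l + 1)) : ℤ)) =
    Nat.fib ((2 * j + 1) * (2 * l + 1)) := by
  induction j with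
  | zero => simp
  | succ j ih =>
    rw [Finset.sum_range_succ']
    have hshift : ∀ k ∈ Finset.range j,
        ((-1 : ℤ) ^ (k + 1) * (lucas (2 * (j + 1 - (k + 1)) * (2 * l + 1)) : ℤ))
        = -((-1) ^ k * (lucas (2 * (j - k) * (2 * l + 1)) : ℤ)) := by
      intro k hk
      rw [show j + 1 - (k + 1) = j - k by omega]
      ring
    rw [Finset.sum_congr rfl hshift, Finset.sum_neg_distrib]
    simp only [Nat.sub_zero, pow_zero, one_mul]
    have hK := key (2 * l) ((2 * j + 1) * (2 * l + 1))
    rw [show 2 * l + 1 + (2 * j + 1) * (2 * l + 1) = 2 * (j + 1) * (2 * l + 1) by ring,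
        show 2 * (2 * l) + 2 + (2 * j + 1) * (2 * l + 1) = (2 * (j + 1) + 1) * (2 * l + 1) by ring,
        pow_succ] at hK
    have hm1 : ((-1 : ℤ)) ^ (2 * l) = 1 := by
      rw [pow_mul]; norm_num
    rw [hm1, one_mul] at hK
    have : (Nat.fib (2 * l + 1) : ℤ) *
        ((-1) ^ (j + 1) + (-∑ k ∈ Finset.range j, (-1) ^ k * (lucas (2 * (j - k) * (2 * l + 1)) : ℤ)
          + (lucas (2 * (j + 1) * (2 * l + 1)) : ℤ)))
        = (Nat.fib (2 * l + 1) : ℤ) * (lucas (2 * (j + 1) * (2 * l + 1)) : ℤ)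
          - (Nat.fib (2 * l + 1) : ℤ) *
            ((-1) ^ j + ∑ k ∈ Finset.range j, (-1) ^ k * (lucas (2 * (j - k) * (2 * l + 1)) : ℤ)) := by
      ring
    rw [this, ih]
    linarith

theorem stmt4 (l m : ℕ) (hl : 0 < l) (hm : 0 < m) :
    (Nat.fib (2 * l + 1) : ℤ) *
        ((-1) ^ m + ∑ k ∈ Finset.range m, (-1) ^ k * (lucas (2 * (m - k) * (2 * l + 1)) : ℤ)) =
      (Nat.fib (2 * m + 1) : ℤ) *
        ((-1) ^ l + ∑ k ∈ Finset.range l, (-1) ^ k * (lucas (2 * (l - k) * (2 * m + 1)) : ℤ)) := by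
  rw [main_claim l m, main_claim m l, Nat.mul_comm]
end

section
/- For every odd integer p ≥ 3, every even positive integer m, and every n ≥ 1, F_{m·p^n} = F_{mp} · ∏_{j=1}^{n-1} [1 + ∑_{k=1}^{(p-1)/2} L_{2k·m·p^j}]. -/
lemma lucas_add_fib (n : ℕ) : lucas n + Nat.fib n = 2 * Nat.fib (n + 1) := by
  induction n using Nat.twoStepInduction with
  | zero => simp [lucas]
  | one => simp [lucas]
  | more n ih1 ih2 =>
      rw [lucas, Nat.fib_add_two, Nat.fib_add_two (n := n + 1)]
      omega

lemma fib_two_mul' (b : ℕ) : Nat.fib (2 * b) = Nat.fib b * lucas b := by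
  have h := lucas_add_fib b
  rw [Nat.fib_two_mul]
  have : 2 * Nat.fib (b + 1) - Nat.fib b = lucas b := by omega
  rw [this]

lemma cassini_even (n : ℕ) :
    Nat.fib (2 * n + 1) ^ 2 = Nat.fib (2 * n) * Nat.fib (2 * n + 2) + 1 := by
  induction n with
  | zero => simp
  | succ n ih =>
      have e1 : Nat.fib (2 * n + 2) = Nat.fib (2 * n) + Nat.fib (2 * n + 1) :=
        Nat.fib_add_two
      have e2 : Nat.fib (2 * n + 3) = Nat.fib (2 * n + 1) + Nat.fib (2 * n + 2) :=
        Nat.fib_add_two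
      have e3 : Nat.fib (2 * n + 4) = Nat.fib (2 * n + 2) + Nat.fib (2 * n + 3) :=
        Nat.fib_add_two
      have : 2 * (n + 1) + 1 = 2 * n + 3 := by ring
      rw [this]
      have : 2 * (n + 1) = 2 * n + 2 := by ring
      rw [this]
      have : 2 * n + 2 + 2 = 2 * n + 4 := by ring
      rw [this]
      nlinarith [ih, e1, e2, e3]

lemma fib_two_mul_add_one' (b : ℕ) (hb : Even b) :
    Nat.fib (2 * b + 1) = Nat.fib b * lucas (b + 1) + 1 := by
  obtain ⟨c, rfl⟩ := hb
  have hb2 : c + c = 2 * c := by ring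
  rw [hb2]
  have h1 := Nat.fib_two_mul_add_one (2 * c)
  have h3 := cassini_even c
  have e : Nat.fib (2 * c + 2) = Nat.fib (2 * c) + Nat.fib (2 * c + 1) :=
    Nat.fib_add_two
  have key : lucas (2 * c + 1) = 2 * Nat.fib (2 * c) + Nat.fib (2 * c + 1) := by
    have h2 := lucas_add_fib (2 * c + 1)
    have e' : Nat.fib (2 * c + 1 + 1) = Nat.fib (2 * c) + Nat.fib (2 * c + 1) :=
      Nat.fib_add_two
    omega
  rw [key, h1]
  nlinarith [h3, e]

/-- Key identity: for even b, fib (n + 2b) = fib b * lucas (n + b) + fib n. -/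
lemma key_ident (b : ℕ) (hb : Even b) (n : ℕ) :
    Nat.fib (n + 2 * b) = Nat.fib b * lucas (n + b) + Nat.fib n := by
  induction n using Nat.twoStepInduction with
  | zero => simpa using fib_two_mul' b
  | one =>
      have h := fib_two_mul_add_one' b hb
      rw [Nat.add_comm 1 (2 * b), Nat.add_comm 1 b]
      simpa using h
  | more n ih1 ih2 =>
      have e1 : n + 2 + 2 * b = (n + 2 * b) + 2 := by ring
      have e2 : n + 1 + 2 * b = (n + 2 * b) + 1 := by ring
      rw [e1, Nat.fib_add_two, ← e2, ih1, ih2]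
      have e3 : n + 2 + b = (n + b) + 2 := by ring
      have e4 : n + 1 + b = (n + b) + 1 := by ring
      rw [e3, lucas, ← e4, Nat.fib_add_two]
      ring

/-- Telescoped: for even N, fib ((2t+1) N) = fib N * (1 + ∑_{k=1}^t lucas (2kN)). -/
lemma telescope (N : ℕ) (hN : Even N) (t : ℕ) :
    Nat.fib ((2 * t + 1) * N) =
      Nat.fib N * (1 + ∑ k ∈ Finset.Icc 1 t, lucas (2 * k * N)) := by
  induction t with
  | zero => simp
  | succ t ih =>
      have e1 : (2 * (t + 1) + 1) * N = (2 * t + 1) * N + 2 * N := by ring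
      rw [e1, key_ident N hN, ih]
      have e2 : (2 * t + 1) * N + N = 2 * (t + 1) * N := by ring
      rw [e2]
      rw [Finset.sum_Icc_succ_top (by omega : 1 ≤ t + 1)]
      ring

theorem stmt8 (p m n : ℕ) (hp : Odd p) (hp' : 3 ≤ p) (hm : Even m) (hm' : 0 < m)
    (hn : 1 ≤ n) :
    Nat.fib (m * p ^ n) =
      Nat.fib (m * p) *
        ∏ j ∈ Finset.Icc 1 (n - 1),
          (1 + ∑ k ∈ Finset.Icc 1 ((p - 1) / 2), lucas (2 * k * m * p ^ j)) := by
  obtain ⟨t, ht⟩ := hp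
  induction n with
  | zero => omega
  | succ n ih =>
      rcases Nat.eq_or_lt_of_le hn with h1 | h1
      · -- n + 1 = 1
        have : n = 0 := by omega
        subst this
        simp
      · -- n ≥ 1
        have hn' : 1 ≤ n := by omega
        have ihn := ih hn'
        have step : Nat.fib (m * p ^ (n + 1)) =
            Nat.fib (m * p ^ n) *
              (1 + ∑ k ∈ Finset.Icc 1 ((p - 1) / 2), lucas (2 * k * m * p ^ n)) := by
          have hNeven : Even (m * p ^ n) := hm.mul_right _
          have e : m * p ^ (n + 1) = (2 * t + 1) * (m * p ^ n) := by
            rw [pow_succ]; rw [ht]; ring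
          have e2 : (p - 1) / 2 = t := by omega
          rw [e, telescope _ hNeven, e2]
          congr 1
          · congr 1
            apply Finset.sum_congr rfl
            intro k _
            congr 1
            ring
        rw [step, ihn]
        have e3 : n + 1 - 1 = n := by omega
        have e4 : n - 1 + 1 = n := by omega
        rw [e3, ← e4, Finset.prod_Icc_succ_top (by omega : 1 ≤ n - 1 + 1), e4]
        ring
end

section
/- For every odd integer p ≥ 1 and every n ≥ 1, F_{p^n} = (-1)^{(n-1)(p-1)/2} · F_p · ∏_{j=1}^{n-1} [1 + ∑_{k=1}^{(p-1)/2} (-1)^k · L_{2k·p^j}], where the identity is understood in the integers. -/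
open Nat in
lemma lucas_eq (n : ℕ) : (lucas n : ℤ) = 2 * fib (n+1) - fib n := by
  induction n using Nat.twoStepInduction with
  | zero => simp [lucas]
  | one => simp [lucas]
  | more n ih1 ih2 =>
    have : lucas (n+2) = lucas n + lucas (n+1) := rfl
    rw [this]
    push_cast [Nat.fib_add_two (n := n+1), Nat.fib_add_two (n := n)] at *
    linarith

open Nat in
lemma cassini (n : ℕ) : (fib (n+2) : ℤ) * fib n + (-1)^n = (fib (n+1))^2 := by
  induction n with
  | zero => simp
  | succ n ih =>
    rw [Nat.fib_add_two (n := n+1)]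
    push_cast [Nat.fib_add_two (n := n)] at *
    ring_nf at *
    linarith

open Nat in
lemma fib2 (n : ℕ) : (fib (2*n) : ℤ) = fib n * lucas n := by
  have h := Nat.fib_two_mul n
  have hle : fib n ≤ 2 * fib (n+1) := le_trans (Nat.fib_le_fib_succ) (by omega)
  rw [lucas_eq]
  have : ((fib (2*n) : ℕ) : ℤ) = (fib n : ℤ) * (2 * fib (n+1) - fib n) := by
    rw [h]; push_cast [hle]; ring
  linarith [this]

open Nat in
lemma fib2' (n : ℕ) : (fib (2*n+1) : ℤ) = fib (n+1)^2 + fib n^2 := by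
  exact_mod_cast congrArg (Nat.cast : ℕ → ℤ) (Nat.fib_two_mul_add_one n)

open Nat in
lemma fibL (b c : ℕ) : (fib (c+2*b) : ℤ) + (-1)^b * fib c = fib (c+b) * lucas b := by
  induction c using Nat.twoStepInduction with
  | zero => simpa using fib2 b
  | one =>
    rw [show 1 + 2*b = 2*b + 1 from by ring, show 1 + b = b + 1 from by ring, lucas_eq, fib2']
    have := cassini b
    push_cast [Nat.fib_add_two (n := b)] at *
    ring_nf at *
    linarith
  | more c ih1 ih2 =>
    have e1 : c + 2 + 2*b = (c + 2*b) + 2 := by ring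
    have e2 : c + 2 + b = (c + b) + 2 := by ring
    have e3 : c + 1 + 2*b = c + 2*b + 1 := by ring
    have e4 : c + 1 + b = c + b + 1 := by ring
    rw [e3, e4] at ih2
    rw [e1, e2, Nat.fib_add_two, Nat.fib_add_two (n := c), Nat.fib_add_two (n := c + b)]
    push_cast at *
    linear_combination ih1 + ih2

open Nat in
lemma lucL (b c : ℕ) : (lucas (c+2*b) : ℤ) + (-1)^b * lucas c = lucas (c+b) * lucas b := by
  have h1 := fibL b c
  have h2 := fibL b (c+1)
  have e : c + 1 + 2*b = c + 2*b + 1 := by ring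
  have e2 : c + 1 + b = c + b + 1 := by ring
  rw [e, e2] at h2
  rw [lucas_eq, lucas_eq c, lucas_eq (c+b)]
  linarith [h1, h2]

def A (m s : ℕ) : ℤ := 1 + ∑ k ∈ Finset.Icc 1 s, (-1) ^ k * (lucas (2 * k * m) : ℤ)

lemma A_succ (m s : ℕ) : A m (s+1) = A m s + (-1)^(s+1) * (lucas (2*(s+1)*m) : ℤ) := by
  unfold A
  rw [Finset.sum_Icc_succ_top (by omega)]
  ring

lemma neg_one_pow_two_mul (m : ℕ) : ((-1 : ℤ))^(2*m) = 1 := by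
  rw [pow_mul]; norm_num

lemma Arec (m s : ℕ) :
    A m (s+2) + (lucas (2*m) : ℤ) * A m (s+1) + A m s = 0 := by
  have hA0 : A m 0 = 1 := by simp [A]
  induction s with
  | zero =>
    have h := lucL (2*m) 0
    rw [neg_one_pow_two_mul] at h
    simp only [Nat.zero_add, lucas] at h
    rw [show (0:ℕ)+2 = 1+1 from rfl, A_succ m 1, A_succ m 0, hA0]
    rw [show 2*(2*m) = 2*(1+1)*m from by ring] at h
    push_cast at h ⊢
    rw [show 2*(0+1)*m = 2*m from by ring]
    linear_combination h
  | succ s ih =>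
    have h := lucL (2*m) (2*(s+1)*m)
    rw [neg_one_pow_two_mul] at h
    rw [show 2*(s+1)*m + 2*(2*m) = 2*((s+2)+1)*m from by ring,
        show 2*(s+1)*m + 2*m = 2*((s+1)+1)*m from by ring] at h
    rw [show s+1+2 = (s+2)+1 from rfl, show s+1+1 = (s+1)+1 from rfl,
        A_succ m (s+2), A_succ m (s+1), A_succ m s]
    rw [show s+2 = (s+1)+1 from rfl, A_succ m (s+1), A_succ m s] at ih
    linear_combination ih + (-1:ℤ)^(s+1) * h

open Nat in
lemma key_s9 (m : ℕ) (hm : Odd m) (s : ℕ) :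
    (fib ((2*s+1)*m) : ℤ) = fib m * ((-1)^s * A m s) := by
  have hA0 : A m 0 = 1 := by simp [A]
  induction s using Nat.twoStepInduction with
  | zero => rw [hA0]; norm_num
  | one =>
    have h1 := fibL m m
    have h2 := fib2 m
    have h3 := lucL m 0
    rw [hm.neg_one_pow] at h1 h3
    simp only [Nat.zero_add, lucas] at h3
    rw [show m + 2*m = (2*1+1)*m from by ring] at h1
    rw [show m + m = 2*m from by ring] at h1
    rw [A_succ m 0, hA0, show 2*(0+1)*m = 2*m from by ring]
    push_cast at h3
    linear_combination h1 + (lucas m : ℤ) * h2 - (fib m : ℤ) * h3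
  | more s ih1 ih2 =>
    have h := fibL (2*m) ((2*s+1)*m)
    rw [neg_one_pow_two_mul] at h
    rw [show (2*s+1)*m + 2*(2*m) = (2*(s+2)+1)*m from by ring,
        show (2*s+1)*m + 2*m = (2*(s+1)+1)*m from by ring] at h
    have hrec := Arec m s
    linear_combination h + (lucas (2*m) : ℤ) * ih2 - ih1
      - ((-1:ℤ)^s * (fib m : ℤ)) * hrec

theorem stmt9 (p n : ℕ) (hp : Odd p) (hp' : 1 ≤ p) (hn : 1 ≤ n) :
    (Nat.fib (p ^ n) : ℤ) =
      (-1) ^ ((n - 1) * (p - 1) / 2) * (Nat.fib p : ℤ) *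
        ∏ j ∈ Finset.Icc 1 (n - 1),
          (1 + ∑ k ∈ Finset.Icc 1 ((p - 1) / 2), (-1) ^ k * (lucas (2 * k * p ^ j) : ℤ)) := by
  obtain ⟨s, hs⟩ := hp
  have hps : p = 2*s+1 := by omega
  have hs' : (p - 1) / 2 = s := by omega
  have hodd : Odd p := ⟨s, hs⟩
  induction n, hn using Nat.le_induction with
  | base => simp
  | succ n hn1 ih =>
    have hm : Odd (p ^ n) := hodd.pow
    have hk := key_s9 (p^n) hm s
    rw [← hps] at hk
    have hpp : p ^ (n+1) = p * p^n := by rw [pow_succ, mul_comm]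
    obtain ⟨b, rfl⟩ : ∃ b, n = b + 1 := ⟨n-1, by omega⟩
    have hp1 : p - 1 = 2*s := by omega
    have e1 : (b+1-1)*(p-1)/2 = b*s := by
      rw [Nat.add_sub_cancel, hp1, show b*(2*s) = (b*s)*2 from by ring,
        Nat.mul_div_cancel _ two_pos]
    have e2 : (b+1+1-1)*(p-1)/2 = b*s + s := by
      rw [Nat.add_sub_cancel, hp1, show (b+1)*(2*s) = (b*s+s)*2 from by ring,
        Nat.mul_div_cancel _ two_pos]
    rw [e1] at ih
    rw [hpp, hk, ih, e2]
    simp only [Nat.add_sub_cancel]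
    rw [Finset.prod_Icc_succ_top (show 1 ≤ b+1 by omega), pow_add, hs']
    unfold A
    ring
end

section
/- For every positive integer m, the series ∑_{n=0}^∞ [(-1)^m − 1 + ∑_{k=0}^{m-1} (-1)^k · L_{2(m-k)(2m+1)^n}] / F_{(2m+1)^{n+1}} converges with sum 1. -/
open Real goldenRatio Filter Topology Finset

lemma lucas_cast_eq : ∀ n : ℕ, (lucas n : ℝ) = φ ^ n + ψ ^ n
  | 0 => by norm_num [lucas]
  | 1 => by simp [lucas]
  | n + 2 => by
    rw [lucas, Nat.cast_add]
    linear_combination lucas_cast_eq n + lucas_cast_eq (n + 1) - φ ^ n * goldenRatio_sq -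
      ψ ^ n * goldenConj_sq

lemma pow_two_mul_add_one_sub_pow_of_mul_eq_neg_one {R : Type*} [CommRing R] {x y : R}
    (h : x * y = -1) : ∀ m : ℕ, x ^ (2 * m + 1) - y ^ (2 * m + 1) =
      (x - y) * ((-1) ^ m + ∑ k ∈ range m, (-1) ^ k * (x ^ (2 * (m - k)) + y ^ (2 * (m - k))))
  | 0 => by simp
  | m + 1 => by
    have ih := pow_two_mul_add_one_sub_pow_of_mul_eq_neg_one h m
    rw [sum_range_succ']
    simp only [Nat.succ_sub_succ_eq_sub, Nat.sub_zero, pow_succ, mul_neg_one, neg_mul,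
      sum_neg_distrib]
    linear_combination -ih + (x ^ (2 * m + 1) - y ^ (2 * m + 1)) * h

lemma fib_mul_of_odd (m : ℕ) {N : ℕ} (hN : Odd N) :
    (Nat.fib ((2 * m + 1) * N) : ℝ) =
      Nat.fib N * ((-1) ^ m + ∑ k ∈ range m, (-1) ^ k * (lucas (2 * (m - k) * N) : ℝ)) := by
  have hxy : φ ^ N * ψ ^ N = -1 := by
    rw [← mul_pow, goldenRatio_mul_goldenConj, hN.neg_one_pow]
  have key := pow_two_mul_add_one_sub_pow_of_mul_eq_neg_one hxy m
  simp only [← pow_mul] at key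
  simp only [coe_fib_eq, lucas_cast_eq, mul_comm _ N]
  linear_combination key / √5

lemma fib_pow_pos {a : ℕ} (ha : 0 < a) (n : ℕ) : 0 < (Nat.fib (a ^ n) : ℝ) := by
  exact_mod_cast Nat.fib_pos.mpr (pow_pos ha n)

lemma lucas_sum_div_fib_pow_succ_eq_inv_sub_inv (m n : ℕ) :
    ((-1 : ℝ) ^ m - 1 +
        ∑ k ∈ range m, (-1 : ℝ) ^ k * (lucas (2 * (m - k) * (2 * m + 1) ^ n) : ℝ)) /
      (Nat.fib ((2 * m + 1) ^ (n + 1)) : ℝ) =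
      (Nat.fib ((2 * m + 1) ^ n) : ℝ)⁻¹ - (Nat.fib ((2 * m + 1) ^ (n + 1)) : ℝ)⁻¹ := by
  have hodd : Odd ((2 * m + 1) ^ n) := (odd_two_mul_add_one m).pow
  have hfib := fib_mul_of_odd m hodd
  rw [← pow_succ'] at hfib
  have h₀ := fib_pow_pos (Nat.succ_pos (2 * m)) n
  have h₁ := fib_pow_pos (Nat.succ_pos (2 * m)) (n + 1)
  field_simp
  linear_combination -hfib

lemma tendsto_fib_atTop : Tendsto Nat.fib atTop atTop :=
  tendsto_atTop_atTop_of_monotone Nat.fib_mono fun b =>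
    ⟨b + 1, by linarith [Nat.le_fib_add_one (b + 1)]⟩

lemma antitone_inv_fib_pow {a : ℕ} (ha : 0 < a) :
    Antitone fun n : ℕ => (Nat.fib (a ^ n) : ℝ)⁻¹ :=
  antitone_nat_of_succ_le fun n => inv_anti₀ (fib_pow_pos ha n) <| by
    exact_mod_cast Nat.fib_mono (Nat.pow_le_pow_right ha n.le_succ)

lemma tendsto_inv_fib_pow {a : ℕ} (ha : 1 < a) :
    Tendsto (fun n : ℕ => (Nat.fib (a ^ n) : ℝ)⁻¹) atTop (𝓝 0) :=
  (tendsto_natCast_atTop_atTop.comp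
    (tendsto_fib_atTop.comp (tendsto_pow_atTop_atTop_of_one_lt ha))).inv_tendsto_atTop

lemma Antitone.hasSum_sub_succ {g : ℕ → ℝ} {l : ℝ} (hg : Antitone g)
    (hl : Tendsto g atTop (𝓝 l)) : HasSum (fun n => g n - g (n + 1)) (g 0 - l) := by
  rw [hasSum_iff_tendsto_nat_of_nonneg fun n => sub_nonneg.mpr (hg n.le_succ)]
  simp only [sum_range_sub']
  exact tendsto_const_nhds.sub hl

theorem stmt13 (m : ℕ) (hm : 0 < m) :
    HasSum
      (fun n : ℕ =>
        ((-1 : ℝ) ^ m - 1 +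
            ∑ k ∈ Finset.range m, (-1 : ℝ) ^ k * (lucas (2 * (m - k) * (2 * m + 1) ^ n) : ℝ)) /
          (Nat.fib ((2 * m + 1) ^ (n + 1)) : ℝ))
      1 := by
  have hsum := (antitone_inv_fib_pow (Nat.succ_pos (2 * m))).hasSum_sub_succ
    (tendsto_inv_fib_pow (by omega : 1 < 2 * m + 1))
  simpa only [lucas_sum_div_fib_pow_succ_eq_inv_sub_inv, pow_zero, Nat.fib_one, Nat.cast_one, inv_one, sub_zero] using hsum
end

section
/- For every positive integer m, the series ∑_{n=0}^∞ [∑_{k=0}^{m-1} L_{2(m-k)(2m+1)^n}] / L_{(2m+1)^{n+1}} converges with sum 1. -/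
/-!
For odd `N`, Binet's formula and `(φψ)^N = -1` give `L_{(2j+3)N} = L_N L_{2(j+1)N} + L_{(2j+1)N}`;
by induction on `m` this yields `L_N (1 + ∑_{k=1}^m L_{2kN}) = L_{(2m+1)N}`. With `N = (2m+1)^n` the
`n`-th term of the series is therefore `1/L_{(2m+1)^n} - 1/L_{(2m+1)^(n+1)}`, and the series
telescopes to `1/L_1 = 1`, since `L_{(2m+1)^n} → ∞`.
-/

open Filter Topology goldenRatio

theorem hasSum_sub_succ_of_antitone {f : ℕ → ℝ} {l : ℝ} (hf : Antitone f)
    (hl : Tendsto f atTop (𝓝 l)) : HasSum (fun n => f n - f (n + 1)) (f 0 - l) := by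
  rw [hasSum_iff_tendsto_nat_of_nonneg fun n => sub_nonneg.2 (hf n.le_succ)]
  simpa only [Finset.sum_range_sub'] using tendsto_const_nhds.sub hl

lemma lucas_pos : ∀ n, 0 < lucas n
  | 0 | 1 => by simp [lucas]
  | n + 2 => Nat.add_pos_left (lucas_pos n) _

lemma self_le_lucas : ∀ n, n ≤ lucas n
  | 0 | 1 => by simp [lucas]
  | n + 2 => by
    have := lucas_pos n
    have := self_le_lucas (n + 1)
    rw [lucas]
    omega

lemma tendsto_lucas_atTop : Tendsto lucas atTop atTop :=
  tendsto_atTop_mono self_le_lucas tendsto_id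

lemma coe_lucas_eq : ∀ n, (lucas n : ℝ) = φ ^ n + ψ ^ n
  | 0 => by norm_num [lucas]
  | 1 => by simp [lucas, Real.goldenRatio_add_goldenConj]
  | n + 2 => by
    rw [lucas, Nat.cast_add, coe_lucas_eq n, coe_lucas_eq (n + 1)]
    linear_combination (-φ ^ n) * Real.goldenRatio_sq - ψ ^ n * Real.goldenConj_sq

lemma coe_lucas_add_two_mul_of_odd (c : ℕ) {b : ℕ} (hb : Odd b) :
    (lucas (c + 2 * b) : ℝ) = lucas (c + b) * lucas b + lucas c := by
  have hprod : φ ^ b * ψ ^ b = -1 := by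
    rw [← mul_pow, Real.goldenRatio_mul_goldenConj, hb.neg_one_pow]
  simp only [coe_lucas_eq]
  linear_combination (-φ ^ c - ψ ^ c) * hprod

lemma coe_lucas_mul_one_add_sum_of_odd {N : ℕ} (hN : Odd N) (m : ℕ) :
    (lucas N : ℝ) * (1 + ∑ k ∈ Finset.range m, (lucas (2 * (k + 1) * N) : ℝ))
      = lucas ((2 * m + 1) * N) := by
  induction m with
  | zero => simp
  | succ m ih =>
    have h := coe_lucas_add_two_mul_of_odd ((2 * m + 1) * N) hN
    rw [show (2 * m + 1) * N + 2 * N = (2 * (m + 1) + 1) * N by ring,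
      show (2 * m + 1) * N + N = 2 * (m + 1) * N by ring] at h
    rw [Finset.sum_range_succ, h, ← ih]
    ring

lemma sum_lucas_div_lucas_eq_inv_sub_inv {N : ℕ} (hN : Odd N) (m : ℕ) :
    (∑ k ∈ Finset.range m, (lucas (2 * (m - k) * N) : ℝ)) / lucas ((2 * m + 1) * N)
      = (lucas N : ℝ)⁻¹ - (lucas ((2 * m + 1) * N) : ℝ)⁻¹ := by
  have hreflect : ∑ k ∈ Finset.range m, (lucas (2 * (m - k) * N) : ℝ)
      = ∑ k ∈ Finset.range m, (lucas (2 * (k + 1) * N) : ℝ) := by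
    rw [← Finset.sum_range_reflect (fun k => (lucas (2 * (k + 1) * N) : ℝ))]
    refine Finset.sum_congr rfl fun k hk => ?_
    rw [show m - 1 - k + 1 = m - k by have := Finset.mem_range.1 hk; omega]
  have hN₀ : (lucas N : ℝ) ≠ 0 := by exact_mod_cast (lucas_pos N).ne'
  have hM₀ : (lucas ((2 * m + 1) * N) : ℝ) ≠ 0 := by exact_mod_cast (lucas_pos _).ne'
  rw [hreflect, ← coe_lucas_mul_one_add_sum_of_odd hN m]
  field_simp
  ring

theorem stmt15 (m : ℕ) (hm : 0 < m) :
    HasSum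
      (fun n : ℕ =>
        (∑ k ∈ Finset.range m, (lucas (2 * (m - k) * (2 * m + 1) ^ n) : ℝ)) /
          (lucas ((2 * m + 1) ^ (n + 1)) : ℝ))
      1 := by
  set a : ℕ → ℝ := fun n => (lucas ((2 * m + 1) ^ n) : ℝ)⁻¹
  have hterm : ∀ n, (∑ k ∈ Finset.range m, (lucas (2 * (m - k) * (2 * m + 1) ^ n) : ℝ)) /
      (lucas ((2 * m + 1) ^ (n + 1)) : ℝ) = a n - a (n + 1) := fun n => by
    simp only [a, pow_succ']
    exact sum_lucas_div_lucas_eq_inv_sub_inv (odd_two_mul_add_one m).pow m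
  have ha : Antitone a := antitone_nat_of_succ_le fun n => by
    rw [← sub_nonneg, ← hterm]
    positivity
  have hlim : Tendsto a atTop (𝓝 0) :=
    tendsto_inv_atTop_zero.comp <| tendsto_natCast_atTop_atTop.comp <|
      tendsto_lucas_atTop.comp <| tendsto_pow_atTop_atTop_of_one_lt (by omega)
  simpa [hterm, a, lucas] using hasSum_sub_succ_of_antitone ha hlim
end
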